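/- For any ε ∈ (0, 1] and any Borel probability measure μ on ℝ giving full measure to the interval [ε, 1], we have sup_{j ≥ 1} |μ̂(j)| ≥ πε/(8 + 2πε), where the supremum is over positive integers j. In particular sup_{j ≥ 1} |μ̂(j)| ≥ ε/5. -/

import Mathlib

/-!
Put `a = ε / 2` and `c n = sin² (π n a) / (π n)²`, the Fourier coefficients of the 1-periodic
triangle function `T` of height `a` and half-width `a`. The Bernoulli identity
`∑ cos (2π n t) / n² = π² (t² - t + 1/6)` on `[0, 1]` gives `2 ∑ c n = T 0 - a² = a (1 - a)` and
`2 ∑ c n cos (2π n y) = T y - a² = -a²` for `a ≤ y ≤ 1 - a`. Integrating the latter at `y = x - a`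
against `μ`, which lives on `[2a, 1]`, and bounding `|∫ cos (2π n (x - a)) dμ| ≤ |μ̂ n|`, we get
`a² ≤ a (1 - a) sup_j |μ̂ j|`, i.e. `sup_j |μ̂ j| ≥ ε / (2 - ε) ≥ ε / 2`, more than both bounds.
-/

open MeasureTheory

noncomputable def FT1 (μ : Measure ℝ) (ξ : ℝ) : ℂ :=
  ∫ x, Complex.exp (-(2 * Real.pi * Complex.I * (ξ * x : ℝ))) ∂μ

open Real

lemma hasSum_cos_div_sq {t : ℝ} (ht : t ∈ Set.Icc (0 : ℝ) 1) :
    HasSum (fun n : ℕ => cos (2 * π * n * t) / n ^ 2) (π ^ 2 * (t ^ 2 - t + 1 / 6)) := by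
  have h := hasSum_one_div_nat_pow_mul_cos one_ne_zero ht (k := 1)
  rw [← bernoulliFun, bernoulliFun_two] at h
  convert h using 1
  · ext n; ring
  · simp only [Nat.reduceMul, Nat.reduceAdd, Nat.factorial_two]
    ring

/-- At `n = 0` this is the junk value `0`, not the mean `a ^ 2` of the triangle function. -/
noncomputable def triangleCoeff (a : ℝ) (n : ℕ) : ℝ := sin (π * n * a) ^ 2 / (π * n) ^ 2

lemma triangleCoeff_nonneg (a : ℝ) (n : ℕ) : 0 ≤ triangleCoeff a n := by
  unfold triangleCoeff; positivity

lemma triangleCoeff_zero_right (a : ℝ) : triangleCoeff a 0 = 0 := by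
  simp [triangleCoeff]

lemma triangleCoeff_eq (a : ℝ) (n : ℕ) :
    triangleCoeff a n = (1 - cos (2 * π * n * a)) / (2 * π ^ 2 * n ^ 2) := by
  rw [triangleCoeff, sin_sq_eq_half_sub]
  ring_nf

lemma hasSum_triangleCoeff {a : ℝ} (ha0 : 0 ≤ a) (ha1 : a ≤ 1) :
    HasSum (triangleCoeff a) (a * (1 - a) / 2) := by
  have H := ((hasSum_cos_div_sq ⟨le_rfl, zero_le_one⟩).sub
    (hasSum_cos_div_sq ⟨ha0, ha1⟩)).div_const (2 * π ^ 2)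
  rw [show (π ^ 2 * (0 ^ 2 - 0 + 1 / 6) - π ^ 2 * (a ^ 2 - a + 1 / 6)) / (2 * π ^ 2)
    = a * (1 - a) / 2 by field_simp; ring] at H
  refine H.congr_fun fun n => ?_
  rw [triangleCoeff_eq, mul_zero, cos_zero]
  ring

lemma hasSum_triangleCoeff_mul_cos {a y : ℝ} (ha : 0 ≤ a) (hy : a ≤ y) (hy' : y + a ≤ 1) :
    HasSum (fun n => triangleCoeff a n * cos (2 * π * n * y)) (-(a ^ 2) / 2) := by
  have H := (((hasSum_cos_div_sq (t := y) ⟨by linarith, by linarith⟩).sub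
    ((hasSum_cos_div_sq (t := y + a) ⟨by linarith, hy'⟩).div_const 2)).sub
    ((hasSum_cos_div_sq (t := y - a) ⟨by linarith, by linarith⟩).div_const 2)).div_const
    (2 * π ^ 2)
  rw [show (π ^ 2 * (y ^ 2 - y + 1 / 6) - π ^ 2 * ((y + a) ^ 2 - (y + a) + 1 / 6) / 2
    - π ^ 2 * ((y - a) ^ 2 - (y - a) + 1 / 6) / 2) / (2 * π ^ 2) = -(a ^ 2) / 2 by
      field_simp; ring] at H
  refine H.congr_fun fun n => ?_
  rw [triangleCoeff_eq, mul_add, mul_sub, cos_add, cos_sub]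
  ring

lemma FT1_eq_charFun (μ : Measure ℝ) (ξ : ℝ) : FT1 μ ξ = charFun μ (-(2 * π * ξ)) := by
  rw [FT1, charFun_apply_real]
  congr with x
  push_cast
  ring_nf

lemma norm_FT1_eq_norm_charFun (μ : Measure ℝ) (ξ : ℝ) :
    ‖FT1 μ ξ‖ = ‖charFun μ (2 * π * ξ)‖ := by
  rw [FT1_eq_charFun, charFun_neg, Complex.norm_conj]

lemma integral_cos_mul_sub_eq_re_charFun (μ : Measure ℝ) [IsFiniteMeasure μ] (t b : ℝ) :
    ∫ x, cos (t * (x - b)) ∂μ = (Complex.exp (↑(-(t * b)) * Complex.I) * charFun μ t).re := by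
  have hint : Integrable (fun x : ℝ => Complex.exp (↑(t * x) * Complex.I)) μ :=
    Integrable.of_bound (by fun_prop) 1
      (ae_of_all _ fun x => (Complex.norm_exp_ofReal_mul_I _).le)
  rw [charFun_apply_real, ← integral_const_mul, ← RCLike.re_to_complex,
    ← integral_re (by simpa using hint.const_mul _)]
  congr with x
  rw [RCLike.re_to_complex, ← Complex.exp_add, ← add_mul, ← Complex.ofReal_mul,
    ← Complex.ofReal_add, Complex.exp_ofReal_mul_I_re]
  ring_nf

lemma abs_integral_cos_mul_sub_le_norm_charFun (μ : Measure ℝ) [IsFiniteMeasure μ] (t b : ℝ) :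
    |∫ x, cos (t * (x - b)) ∂μ| ≤ ‖charFun μ t‖ := by
  rw [integral_cos_mul_sub_eq_re_charFun]
  refine (Complex.abs_re_le_norm _).trans_eq ?_
  rw [norm_mul, Complex.norm_exp_ofReal_mul_I, one_mul]

lemma integrable_cos_mul_sub (μ : Measure ℝ) [IsFiniteMeasure μ] (t b : ℝ) :
    Integrable (fun x => cos (t * (x - b))) μ :=
  Integrable.of_bound (by fun_prop) 1 (ae_of_all _ fun x => by simpa using abs_cos_le_one _)

lemma hasSum_triangleCoeff_mul_integral_cos {μ : Measure ℝ} [IsProbabilityMeasure μ] {a : ℝ}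
    (ha : 0 ≤ a) (hμ : ∀ᵐ x ∂μ, x ∈ Set.Icc (2 * a) 1) :
    HasSum (fun n : ℕ => triangleCoeff a n * ∫ x, cos (2 * π * n * (x - a)) ∂μ)
      (-(a ^ 2) / 2) := by
  obtain ⟨x₀, hx₀⟩ := hμ.exists
  have hc := hasSum_triangleCoeff ha (by linarith [hx₀.1, hx₀.2])
  set F : ℕ → ℝ → ℝ := fun n x => triangleCoeff a n * cos (2 * π * n * (x - a))
  have hF : ∀ n, Integrable (F n) μ := fun n => (integrable_cos_mul_sub μ _ _).const_mul _
  have hF_norm : ∀ n, ∫ x, ‖F n x‖ ∂μ ≤ triangleCoeff a n := fun n =>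
    calc ∫ x, ‖F n x‖ ∂μ ≤ ∫ _, triangleCoeff a n ∂μ :=
          integral_mono (hF n).norm (integrable_const _) fun x => by
            simp only [F, norm_mul, Real.norm_of_nonneg (triangleCoeff_nonneg a n)]
            exact mul_le_of_le_one_right (triangleCoeff_nonneg a n) (abs_cos_le_one _)
      _ = triangleCoeff a n := by simp
  have hswap := hasSum_integral_of_summable_integral_norm hF
    (hc.summable.of_nonneg_of_le (fun n => integral_nonneg fun x => norm_nonneg _) hF_norm)
  have hsum_ae : ∀ᵐ x ∂μ, ∑' n, F n x = -(a ^ 2) / 2 := by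
    filter_upwards [hμ] with x hx
    exact (hasSum_triangleCoeff_mul_cos ha (by linarith [hx.1]) (by linarith [hx.2])).tsum_eq
  rw [integral_congr_ae hsum_ae, integral_const, probReal_univ, one_smul] at hswap
  simpa only [F, integral_const_mul] using hswap

lemma div_two_sub_le_iSup_norm_FT1 {ε : ℝ} (hε0 : 0 < ε) (hε1 : ε ≤ 1) {μ : Measure ℝ}
    [IsProbabilityMeasure μ] (hμ : ∀ᵐ x ∂μ, x ∈ Set.Icc ε 1) :
    ε / (2 - ε) ≤ ⨆ j : ℕ+, ‖FT1 μ j‖ := by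
  set M := ⨆ j : ℕ+, ‖FT1 μ j‖
  set a := ε / 2 with ha
  have hbdd : BddAbove (Set.range fun j : ℕ+ => ‖FT1 μ j‖) := ⟨1, by
    rintro _ ⟨j, rfl⟩
    exact (norm_FT1_eq_norm_charFun μ _).trans_le (norm_charFun_le_one _)⟩
  have hterm : ∀ n : ℕ, ‖triangleCoeff a n * ∫ x, cos (2 * π * n * (x - a)) ∂μ‖
      ≤ triangleCoeff a n * M := fun n => by
    rw [norm_mul, Real.norm_of_nonneg (triangleCoeff_nonneg a n)]
    rcases n.eq_zero_or_pos with rfl | hn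
    · simp [triangleCoeff_zero_right]
    · refine mul_le_mul_of_nonneg_left ?_ (triangleCoeff_nonneg a n)
      calc ‖∫ x, cos (2 * π * n * (x - a)) ∂μ‖ ≤ ‖charFun μ (2 * π * n)‖ :=
            abs_integral_cos_mul_sub_le_norm_charFun μ _ _
        _ = ‖FT1 μ n‖ := (norm_FT1_eq_norm_charFun μ _).symm
        _ ≤ M := le_ciSup hbdd ⟨n, hn⟩
  have hbound := tsum_of_norm_bounded
    ((hasSum_triangleCoeff (by positivity) (by linarith)).mul_right M) hterm
  rw [(hasSum_triangleCoeff_mul_integral_cos (by positivity)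
    (by simpa only [ha, mul_div_cancel₀ ε two_ne_zero] using hμ)).tsum_eq, neg_div, norm_neg,
    Real.norm_of_nonneg (by positivity)] at hbound
  have hεM : ε * ε ≤ ε * ((2 - ε) * M) := by
    rw [ha] at hbound
    linarith
  rw [div_le_iff₀ (by linarith), mul_comm]
  exact le_of_mul_le_mul_left hεM hε0

theorem stmt1 (ε : ℝ) (hε0 : 0 < ε) (hε1 : ε ≤ 1)
    (μ : Measure ℝ) [IsProbabilityMeasure μ] (hμ : μ (Set.Icc ε 1) = 1) :
    Real.pi * ε / (8 + 2 * Real.pi * ε) ≤ ⨆ j : ℕ+, ‖FT1 μ (j : ℝ)‖ ∧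
    ε / 5 ≤ ⨆ j : ℕ+, ‖FT1 μ (j : ℝ)‖ := by
  have hae : ∀ᵐ x ∂μ, x ∈ Set.Icc ε 1 := by
    rw [ae_mem_iff_measure_eq measurableSet_Icc.nullMeasurableSet, hμ, measure_univ]
  have hhalf : ε / 2 ≤ ⨆ j : ℕ+, ‖FT1 μ (j : ℝ)‖ :=
    (div_le_div_of_nonneg_left hε0.le (by linarith) (by linarith)).trans
      (div_two_sub_le_iSup_norm_FT1 hε0 hε1 hae)
  refine ⟨le_trans ?_ hhalf, by linarith⟩
  rw [div_le_div_iff₀ (by positivity) two_pos]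
  nlinarith [mul_le_mul_of_nonneg_right pi_le_four hε0.le, mul_pos (mul_pos pi_pos hε0) hε0]
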